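/- arXiv:2409.17117 — 6 statements merged into one kernel-verified Lean document; each statement's English description precedes it below -/
import Mathlib

section
/- (Theorem 1, lines formulation.) Let a, b, c, d be natural numbers. Let L be a finite set of pairwise distinct, pairwise non-parallel lines in ℝ² with |L| = a + b + c + 3. Let A, B, C be three distinct points of ℝ² such that exactly a + 2 lines of L pass through A, exactly b + 2 lines of L pass through B, and exactly c + 2 lines of L pass through C. Suppose that every point of ℝ² other than A, B, C lies on at most 3 lines of L, and that exactly d points other than A, B, C lie on exactly 3 lines of L. Then the number of 3-element subsets of L whose three lines are not concurrent equals C(a+b+c+3, 3) − C(a+2, 3) − C(b+2, 3) − C(c+2, 3) − d. -/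
/-!
Two distinct lines meet in at most one point, so every concurrent triple of lines has a unique
common point `p` and is a 3-subset of the pencil of lines through `p`. Hence the concurrent
triples are counted by `∑ₚ C(nₚ, 3)`, where `nₚ` is the number of lines through `p`; only `A`,
`B`, `C` and the `d` triple points contribute, the latter with `C(3, 3) = 1` each.
-/

open Finset Module

section Concurrency

variable {k V P : Type*} [DivisionRing k] [AddCommGroup V] [Module k V] [AddTorsor V P]

theorem AffineSubspace.affineSpan_pair_eq_of_finrank_direction_eq_one {l : AffineSubspace k P}
    (hl : finrank k l.direction = 1) {p q : P} (hp : p ∈ l) (hq : q ∈ l) (hpq : p ≠ q) :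
    line[k, p, q] = l := by
  have hle : line[k, p, q] ≤ l := affineSpan_pair_le_of_mem_of_mem hp hq
  refine AffineSubspace.eq_of_direction_eq_of_nonempty_of_le ?_
    ⟨p, left_mem_affineSpan_pair k p q⟩ hle
  have : FiniteDimensional k l.direction := Module.finite_of_finrank_eq_succ hl
  refine Submodule.eq_of_le_of_finrank_eq (AffineSubspace.direction_le hle) ?_
  rw [direction_affineSpan, vectorSpan_pair, finrank_span_singleton (vsub_ne_zero.2 hpq), hl]

theorem eq_of_forall_mem_of_one_lt_card {s : Finset (AffineSubspace k P)}
    (hs : ∀ l ∈ s, finrank k l.direction = 1) (hcard : 1 < s.card) {p q : P}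
    (hp : ∀ l ∈ s, p ∈ l) (hq : ∀ l ∈ s, q ∈ l) : p = q := by
  obtain ⟨l₁, hl₁, l₂, hl₂, hne⟩ := one_lt_card.1 hcard
  by_contra hpq
  apply hne
  rw [← AffineSubspace.affineSpan_pair_eq_of_finrank_direction_eq_one (hs l₁ hl₁)
      (hp l₁ hl₁) (hq l₁ hl₁) hpq,
    ← AffineSubspace.affineSpan_pair_eq_of_finrank_direction_eq_one (hs l₂ hl₂)
      (hp l₂ hl₂) (hq l₂ hl₂) hpq]

open scoped Classical in
theorem card_filter_concurrent_powersetCard {L : Finset (AffineSubspace k P)}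
    (hL : ∀ l ∈ L, finrank k l.direction = 1) {n : ℕ} (hn : 2 ≤ n) (S : Finset P)
    (hS : ∀ p, n ≤ (L.filter (p ∈ ·)).card → p ∈ S) :
    ((L.powersetCard n).filter (fun s => ∃ p, ∀ l ∈ s, p ∈ l)).card =
      ∑ p ∈ S, (L.filter (p ∈ ·)).card.choose n := by
  have hpencils : (L.powersetCard n).filter (fun s => ∃ p, ∀ l ∈ s, p ∈ l) =
      S.biUnion fun p => (L.filter (p ∈ ·)).powersetCard n := by
    ext s
    simp only [mem_filter, mem_powersetCard, mem_biUnion]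
    constructor
    · rintro ⟨⟨hsL, rfl⟩, p, hp⟩
      have hsub : s ⊆ L.filter (p ∈ ·) := fun l hl => mem_filter.2 ⟨hsL hl, hp l hl⟩
      exact ⟨p, hS p (card_le_card hsub), hsub, rfl⟩
    · rintro ⟨p, -, hsub, rfl⟩
      exact ⟨⟨hsub.trans (filter_subset _ _), rfl⟩, p, fun l hl => (mem_filter.1 (hsub hl)).2⟩
  rw [hpencils, card_biUnion]
  · simp only [card_powersetCard]
  · intro p _ q _ hpq
    refine disjoint_left.2 fun s hsp hsq => hpq ?_
    rw [mem_powersetCard] at hsp hsq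
    exact eq_of_forall_mem_of_one_lt_card (fun l hl => hL l (mem_filter.1 (hsp.1 hl)).1)
      (by omega) (fun l hl => (mem_filter.1 (hsp.1 hl)).2)
      (fun l hl => (mem_filter.1 (hsq.1 hl)).2)

end Concurrency

open scoped Classical in
theorem stmt_2_general (a b c d : ℕ) (L : Finset (AffineSubspace ℝ (ℝ × ℝ)))
    (hline : ∀ l ∈ L, Module.finrank ℝ l.direction = 1)
    (hcard : L.card = a + b + c + 3)
    (A B C : ℝ × ℝ) (hAB : A ≠ B) (hAC : A ≠ C) (hBC : B ≠ C)
    (hA : (L.filter (fun l => A ∈ l)).card = a + 2)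
    (hB : (L.filter (fun l => B ∈ l)).card = b + 2)
    (hC : (L.filter (fun l => C ∈ l)).card = c + 2)
    (hmax : ∀ p : ℝ × ℝ, p ≠ A → p ≠ B → p ≠ C →
      (L.filter (fun l => p ∈ l)).card ≤ 3)
    (D : Finset (ℝ × ℝ))
    (hD : ∀ p : ℝ × ℝ, p ∈ D ↔
      p ≠ A ∧ p ≠ B ∧ p ≠ C ∧ (L.filter (fun l => p ∈ l)).card = 3)
    (hDcard : D.card = d) :
    ((((L.powersetCard 3).filter
        (fun s => ¬ ∃ p : ℝ × ℝ, ∀ l ∈ s, p ∈ l)).card : ℤ))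
      = ((a + b + c + 3).choose 3 : ℤ) - ((a + 2).choose 3 : ℤ)
        - ((b + 2).choose 3 : ℤ) - ((c + 2).choose 3 : ℤ) - (d : ℤ) := by
  have hconc := card_filter_concurrent_powersetCard hline (n := 3) (by norm_num)
    (insert A (insert B (insert C D))) fun p hp => by
      by_cases hpA : p = A; · simp [hpA]
      by_cases hpB : p = B; · simp [hpB]
      by_cases hpC : p = C; · simp [hpC]
      simp only [mem_insert, hpA, hpB, hpC, false_or]
      exact (hD p).2 ⟨hpA, hpB, hpC, le_antisymm (hmax p hpA hpB hpC) hp⟩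
  have htriple : ∑ p ∈ D, (L.filter (p ∈ ·)).card.choose 3 = d := by
    rw [sum_congr rfl fun p hp => by rw [((hD p).1 hp).2.2.2], Nat.choose_self, sum_const,
      smul_eq_mul, mul_one, hDcard]
  have hCD : C ∉ D := fun h => ((hD C).1 h).2.2.1 rfl
  have hBCD : B ∉ insert C D := by simpa [hBC] using fun h => ((hD B).1 h).2.1 rfl
  have hABCD : A ∉ insert B (insert C D) := by
    simpa [hAB, hAC] using fun h => ((hD A).1 h).1 rfl
  rw [sum_insert hABCD, sum_insert hBCD, sum_insert hCD, hA, hB, hC, htriple] at hconc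
  have htotal := card_filter_add_card_filter_not (s := L.powersetCard 3)
    (p := fun s => ∃ p, ∀ l ∈ s, p ∈ l)
  rw [card_powersetCard, hcard, hconc] at htotal
  omega

open scoped Classical in
/-- Theorem 1 (lines formulation): for a set `L` of `a+b+c+3` pairwise distinct,
pairwise non-parallel lines in ℝ², with exactly `a+2` lines through `A`, `b+2`
through `B`, `c+2` through `C`, every other point on at most 3 lines, and
exactly `d` other points on exactly 3 lines, the number of non-concurrent
3-element subsets of `L` is `C(a+b+c+3,3) − C(a+2,3) − C(b+2,3) − C(c+2,3) − d`. -/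
theorem stmt_2 (a b c d : ℕ) (L : Finset (AffineSubspace ℝ (ℝ × ℝ)))
    (hline : ∀ l ∈ L, Module.finrank ℝ l.direction = 1)
    (hpar : ∀ l1 ∈ L, ∀ l2 ∈ L, l1 ≠ l2 → l1.direction ≠ l2.direction)
    (hcard : L.card = a + b + c + 3)
    (A B C : ℝ × ℝ) (hAB : A ≠ B) (hAC : A ≠ C) (hBC : B ≠ C)
    (hA : (L.filter (fun l => A ∈ l)).card = a + 2)
    (hB : (L.filter (fun l => B ∈ l)).card = b + 2)
    (hC : (L.filter (fun l => C ∈ l)).card = c + 2)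
    (hmax : ∀ p : ℝ × ℝ, p ≠ A → p ≠ B → p ≠ C →
      (L.filter (fun l => p ∈ l)).card ≤ 3)
    (D : Finset (ℝ × ℝ))
    (hD : ∀ p : ℝ × ℝ, p ∈ D ↔
      p ≠ A ∧ p ≠ B ∧ p ≠ C ∧ (L.filter (fun l => p ∈ l)).card = 3)
    (hDcard : D.card = d) :
    ((((L.powersetCard 3).filter
        (fun s => ¬ ∃ p : ℝ × ℝ, ∀ l ∈ s, p ∈ l)).card : ℤ))
      = ((a + b + c + 3).choose 3 : ℤ) - ((a + 2).choose 3 : ℤ)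
        - ((b + 2).choose 3 : ℤ) - ((c + 2).choose 3 : ℤ) - (d : ℤ) :=
  stmt_2_general a b c d L hline hcard A B C hAB hAC hBC hA hB hC hmax D hD hDcard
end

section
/- Let p be an odd prime. Then there exist no integers i, j, k with 1 ≤ i ≤ p−1, 1 ≤ j ≤ p−1, 1 ≤ k ≤ p−1 such that i·j·k = (p−i)·(p−j)·(p−k). -/
/-!
Reducing modulo `p`, the right-hand side becomes `-i·j·k`, so `p ∣ 2·i·j·k`. As `p` is an odd
prime, it divides none of `2, i, j, k`.
-/

theorem dvd_two_mul_of_mul_mul_eq_sub_mul_sub_mul_sub {R : Type*} [CommRing R] {n a b c : R}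
    (h : a * b * c = (n - a) * (n - b) * (n - c)) : n ∣ 2 * (a * b * c) :=
  ⟨n ^ 2 - n * (a + b + c) + (a * b + b * c + c * a), by linear_combination h⟩

/-- For an odd prime `p`, there are no integers `1 ≤ i, j, k ≤ p − 1` with
`i·j·k = (p−i)·(p−j)·(p−k)`. -/
theorem stmt_7 (p : ℕ) (hp : p.Prime) (hodd : Odd p) :
    ¬ ∃ i j k : ℤ, 1 ≤ i ∧ i ≤ (p : ℤ) - 1 ∧ 1 ≤ j ∧ j ≤ (p : ℤ) - 1 ∧
      1 ≤ k ∧ k ≤ (p : ℤ) - 1 ∧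
      i * j * k = ((p : ℤ) - i) * ((p : ℤ) - j) * ((p : ℤ) - k) := by
  rintro ⟨i, j, k, hi1, hi2, hj1, hj2, hk1, hk2, heq⟩
  have hprime : Prime (p : ℤ) := Nat.prime_iff_prime_int.mp hp
  have htwo : 2 < p := hp.two_le.lt_of_ne (hodd.ne_two_of_dvd_nat dvd_rfl).symm
  have hsmall (x : ℤ) (hx : 0 < x) (hxp : x < p) : ¬ (p : ℤ) ∣ x := fun h =>
    hx.ne' (Int.eq_zero_of_dvd_of_nonneg_of_lt hx.le hxp h)
  have hdvd := dvd_two_mul_of_mul_mul_eq_sub_mul_sub_mul_sub heq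
  simp only [hprime.dvd_mul] at hdvd
  rcases hdvd with h | (h | h) | h
  · exact hsmall 2 two_pos (by exact_mod_cast htwo) h
  · exact hsmall i hi1 (by omega) h
  · exact hsmall j hj1 (by omega) h
  · exact hsmall k hk1 (by omega) h
end

section
/- Let p be an odd prime, let m ≥ 1 be a natural number, and set q = p^m. Then there exist no integers i, j, k with 1 ≤ i ≤ q−1, 1 ≤ j ≤ q−1, 1 ≤ k ≤ q−1 such that i·j·k = (q−i)·(q−j)·(q−k). -/
/-!
Write each of `i, j, k` as `p^a x` with `p ∤ x`; since `0 < i < p^m` we have `a < m`, so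
`q - i = p^a (p^(m-a) - x)` carries the same power of `p` and its `p`-free part is `≡ -x (mod p)`.
Cancelling the common power of `p` from the equation leaves `u = u'` with `u' ≡ -u (mod p)` and
`p ∤ u`, i.e. `p ∣ 2u`, which is impossible for odd `p`.
-/

namespace Int

lemma exists_lt_pow_mul_not_dvd_of_lt_pow {p : ℤ} (hp : 1 < p) {m : ℕ} {n : ℤ} (h0 : 0 < n)
    (hn : n < p ^ m) : ∃ a < m, ∃ x, ¬ p ∣ x ∧ n = p ^ a * x := by
  have hfin : FiniteMultiplicity p n :=
    Int.finiteMultiplicity_iff.mpr ⟨by omega, h0.ne'⟩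
  obtain ⟨x, hnx, hx⟩ := hfin.exists_eq_pow_mul_and_not_dvd
  refine ⟨multiplicity p n, ?_, x, hx, hnx⟩
  have hpow : 0 < p ^ multiplicity p n := pow_pos (by omega) _
  have hxpos : 0 < x := pos_of_mul_pos_right (hnx ▸ h0) hpow.le
  refine (pow_lt_pow_iff_right₀ hp).mp (lt_of_le_of_lt ?_ hn)
  calc p ^ multiplicity p n ≤ p ^ multiplicity p n * x := le_mul_of_one_le_right hpow.le hxpos
    _ = n := hnx.symm

lemma pow_sub_pow_mul_eq {p : ℤ} {a m : ℕ} (ha : a ≤ m) (x : ℤ) :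
    p ^ m - p ^ a * x = p ^ a * (p ^ (m - a) - x) := by
  rw [mul_sub, ← pow_add, Nat.add_sub_cancel' ha]

lemma pow_sub_modEq_neg {p : ℤ} {k : ℕ} (hk : k ≠ 0) (x : ℤ) : p ^ k - x ≡ -x [ZMOD p] := by
  simpa using (Int.modEq_zero_iff_dvd.mpr (dvd_pow_self p hk)).sub_right x

lemma exists_pow_mul_and_pow_sub_eq_pow_mul {p : ℤ} (hp : 1 < p) {m : ℕ} {n : ℤ} (h0 : 0 < n)
    (hn : n < p ^ m) :
    ∃ (a : ℕ) (x y : ℤ), ¬ p ∣ x ∧ y ≡ -x [ZMOD p] ∧ n = p ^ a * x ∧ p ^ m - n = p ^ a * y := by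
  obtain ⟨a, ha, x, hx, rfl⟩ := exists_lt_pow_mul_not_dvd_of_lt_pow hp h0 hn
  exact ⟨a, x, _, hx, pow_sub_modEq_neg (by omega) x, rfl, pow_sub_pow_mul_eq ha.le x⟩

lemma not_modEq_neg_self {p u : ℤ} (hp : Prime p) (hp2 : ¬ p ∣ 2) (hu : ¬ p ∣ u) :
    ¬ u ≡ -u [ZMOD p] := by
  intro h
  have h2u : p ∣ 2 * u := by simpa [two_mul, ← sub_eq_add_neg] using h.dvd.neg_right
  exact (hp.dvd_mul.mp h2u).elim hp2 hu

end Int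

theorem stmt_8_general (p m q : ℕ) (hp : p.Prime) (hodd : Odd p)
    (hq : q = p ^ m) :
    ¬ ∃ i j k : ℤ, 1 ≤ i ∧ i ≤ (q : ℤ) - 1 ∧ 1 ≤ j ∧ j ≤ (q : ℤ) - 1 ∧
      1 ≤ k ∧ k ≤ (q : ℤ) - 1 ∧
      i * j * k = ((q : ℤ) - i) * ((q : ℤ) - j) * ((q : ℤ) - k) := by
  rintro ⟨i, j, k, hi1, hi2, hj1, hj2, hk1, hk2, heq⟩
  subst hq
  push_cast at hi2 hj2 hk2 heq
  have hpZ : Prime (p : ℤ) := Nat.prime_iff_prime_int.mp hp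
  have hp2 : ¬ (p : ℤ) ∣ 2 := fun h => by
    obtain rfl := (Nat.prime_dvd_prime_iff_eq hp Nat.prime_two).mp (by exact_mod_cast h)
    exact absurd hodd (by decide)
  have split (n : ℤ) (h1 : 1 ≤ n) (h2 : n ≤ (p : ℤ) ^ m - 1) :=
    Int.exists_pow_mul_and_pow_sub_eq_pow_mul (p := p) (m := m) (by exact_mod_cast hp.one_lt) h1
      (by omega)
  obtain ⟨a, x, x', hx, hx', hix, hix'⟩ := split i hi1 hi2
  obtain ⟨b, y, y', hy, hy', hjy, hjy'⟩ := split j hj1 hj2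
  obtain ⟨c, z, z', hz, hz', hkz, hkz'⟩ := split k hk1 hk2
  have hfree : x * y * z = x' * y' * z' := by
    refine mul_left_cancel₀ (pow_ne_zero (a + b + c) hpZ.ne_zero) ?_
    calc _ = i * j * k := by rw [hix, hjy, hkz]; ring
      _ = _ := heq
      _ = _ := by rw [hix', hjy', hkz']; ring
  refine Int.not_modEq_neg_self hpZ hp2 (u := x * y * z) ?_ ?_
  · simpa only [hpZ.dvd_mul, not_or] using ⟨⟨hx, hy⟩, hz⟩
  · calc x * y * z = x' * y' * z' := hfree
      _ ≡ -x * -y * -z [ZMOD p] := (hx'.mul hy').mul hz'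
      _ = -(x * y * z) := by ring

/-- For `q = p^m` a power of an odd prime `p` (with `m ≥ 1`), there are no
integers `1 ≤ i, j, k ≤ q − 1` with `i·j·k = (q−i)·(q−j)·(q−k)`. -/
theorem stmt_8 (p m q : ℕ) (hp : p.Prime) (hodd : Odd p) (hm : 1 ≤ m)
    (hq : q = p ^ m) :
    ¬ ∃ i j k : ℤ, 1 ≤ i ∧ i ≤ (q : ℤ) - 1 ∧ 1 ≤ j ∧ j ≤ (q : ℤ) - 1 ∧
      1 ≤ k ∧ k ≤ (q : ℤ) - 1 ∧
      i * j * k = ((q : ℤ) - i) * ((q : ℤ) - j) * ((q : ℤ) - k) :=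
  stmt_8_general p m q hp hodd hq
end

section
/- Let m ≥ 1 be a natural number and set q = 2^m. If integers i, j, k satisfy 1 ≤ i ≤ q−1, 1 ≤ j ≤ q−1, 1 ≤ k ≤ q−1 and i·j·k = (q−i)·(q−j)·(q−k), then i = q/2 or j = q/2 or k = q/2. -/
/-!
With `x = 2i - q`, `y = 2j - q`, `z = 2k - q` the equation becomes `xyz = -q²(x + y + z)`,
where `x, y, z` are nonzero (none of `i, j, k` is `q/2`) and `|x|, |y|, |z| < q = 2^m`.
Comparing 2-adic valuations: each of `x, y, z` has valuation `< m`, so the right side has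
valuation at least `2m + min(v x, v y, v z)`, which exceeds `v x + v y + v z`, the valuation
of the left side.
-/

theorem padicValInt_lt_of_natAbs_lt_pow {p m : ℕ} {x : ℤ} (hx : x ≠ 0)
    (h : x.natAbs < p ^ m) : padicValInt p x < m :=
  (padicValNat_le_nat_log _).trans_lt (Nat.log_lt_of_lt_pow (Int.natAbs_ne_zero.mpr hx) h)

theorem not_pow_two_mul_mul_add_dvd_mul {p m : ℕ} [Fact p.Prime] {x y z : ℤ}
    (hx : x ≠ 0) (hy : y ≠ 0) (hz : z ≠ 0)
    (hxm : x.natAbs < p ^ m) (hym : y.natAbs < p ^ m) (hzm : z.natAbs < p ^ m) :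
    ¬ (p : ℤ) ^ (2 * m) * (x + y + z) ∣ x * y * z := by
  intro hdvd
  set a := padicValInt p x
  set b := padicValInt p y
  set c := padicValInt p z
  have pow_dvd {n : ℕ} {w : ℤ} (h : n ≤ padicValInt p w) : (p : ℤ) ^ n ∣ w :=
    (padicValInt_dvd_iff n w).mpr (Or.inr h)
  have hsum : (p : ℤ) ^ min a (min b c) ∣ x + y + z :=
    dvd_add (dvd_add (pow_dvd (by omega)) (pow_dvd (by omega))) (pow_dvd (by omega))
  have hprod : (p : ℤ) ^ (2 * m + min a (min b c)) ∣ x * y * z :=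
    (pow_add (p : ℤ) _ _ ▸ mul_dvd_mul_left _ hsum).trans hdvd
  have hval : padicValInt p (x * y * z) = a + b + c := by
    rw [padicValInt.mul (mul_ne_zero hx hy) hz, padicValInt.mul hx hy]
  have hprod_le := ((padicValInt_dvd_iff _ _).mp hprod).resolve_left (by positivity)
  have := padicValInt_lt_of_natAbs_lt_pow hx hxm
  have := padicValInt_lt_of_natAbs_lt_pow hy hym
  have := padicValInt_lt_of_natAbs_lt_pow hz hzm
  omega

theorem stmt_9_general (m q : ℕ) (hq : q = 2 ^ m)
    (i j k : ℤ)
    (hi1 : 1 ≤ i) (hi2 : i ≤ (q : ℤ) - 1)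
    (hj1 : 1 ≤ j) (hj2 : j ≤ (q : ℤ) - 1)
    (hk1 : 1 ≤ k) (hk2 : k ≤ (q : ℤ) - 1)
    (heq : i * j * k = ((q : ℤ) - i) * ((q : ℤ) - j) * ((q : ℤ) - k)) :
    i = (q : ℤ) / 2 ∨ j = (q : ℤ) / 2 ∨ k = (q : ℤ) / 2 := by
  by_contra! hne
  obtain ⟨hi, hj, hk⟩ := hne
  have hqZ : (q : ℤ) = (2 : ℕ) ^ m := by simp [hq]
  have hcentred : (2 * i - q) * (2 * j - q) * (2 * k - q) =
      -(q : ℤ) ^ 2 * ((2 * i - q) + (2 * j - q) + (2 * k - q)) := by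
    linear_combination 4 * heq
  refine not_pow_two_mul_mul_add_dvd_mul (p := 2) (m := m)
    (x := 2 * i - q) (y := 2 * j - q) (z := 2 * k - q)
    (by omega) (by omega) (by omega) (by rw [← hq]; omega) (by rw [← hq]; omega)
    (by rw [← hq]; omega) ⟨-1, ?_⟩
  rw [hcentred, pow_mul', ← hqZ]
  ring

/-- For `q = 2^m` (with `m ≥ 1`), if integers `1 ≤ i, j, k ≤ q − 1` satisfy
`i·j·k = (q−i)·(q−j)·(q−k)`, then at least one of `i, j, k` equals `q/2`. -/
theorem stmt_9 (m q : ℕ) (hm : 1 ≤ m) (hq : q = 2 ^ m)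
    (i j k : ℤ)
    (hi1 : 1 ≤ i) (hi2 : i ≤ (q : ℤ) - 1)
    (hj1 : 1 ≤ j) (hj2 : j ≤ (q : ℤ) - 1)
    (hk1 : 1 ≤ k) (hk2 : k ≤ (q : ℤ) - 1)
    (heq : i * j * k = ((q : ℤ) - i) * ((q : ℤ) - j) * ((q : ℤ) - k)) :
    i = (q : ℤ) / 2 ∨ j = (q : ℤ) / 2 ∨ k = (q : ℤ) / 2 :=
  stmt_9_general m q hq i j k hi1 hi2 hj1 hj2 hk1 hk2 heq
end

section
/- Let m ≥ 1 be a natural number and set q = 2^m. For integers i, j, k with 1 ≤ i ≤ q−1, 1 ≤ j ≤ q−1, 1 ≤ k ≤ q−1, the equation i·j·k = (q−i)·(q−j)·(q−k) holds if and only if (i = q/2 and j + k = q) or (j = q/2 and i + k = q) or (k = q/2 and i + j = q). -/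
/-! Write `i = 2^a u`, `j = 2^b v`, `k = 2^c w` with `u, v, w` odd and, by symmetry, `c` the
largest exponent. Since `q - i = 2^a (2^(m-a) - u)` and so on, cancelling `2^(a+b+c)` leaves
`u v w = (2^(m-a) - u) (2^(m-b) - v) (2^(m-c) - w)`, which modulo `2^(m-c)` reads
`u v w ≡ -u v w`. As `u v w` is odd, `m - c ≤ 1`, i.e. `k = q/2`; and once `q = 2k` the equation
becomes `q k (i + j - q) = 0`. -/

/-- Ceva's condition for the cevians through the `i`-th, `j`-th and `k`-th of the points dividing
each side of a triangle into `q` equal parts. -/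
def IsCevaConcurrent {R : Type*} [CommRing R] (q i j k : R) : Prop :=
  i * j * k = (q - i) * (q - j) * (q - k)

section CommRing

variable {R : Type*} [CommRing R] {q i j k : R}

theorem IsCevaConcurrent.rotate (h : IsCevaConcurrent q i j k) : IsCevaConcurrent q j k i := by
  unfold IsCevaConcurrent at *
  linear_combination h

theorem isCevaConcurrent_iff_add_eq_of_two_mul [NoZeroDivisors R] (hq : q = 2 * k) (hq0 : q ≠ 0) :
    IsCevaConcurrent q i j k ↔ i + j = q := by
  subst hq
  have hk : k ≠ 0 := right_ne_zero_of_mul hq0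
  rw [IsCevaConcurrent, ← sub_eq_zero,
    show i * j * k - (2 * k - i) * (2 * k - j) * (2 * k - k) = 2 * k * k * (i + j - 2 * k) by
      ring]
  simp [hq0, hk, sub_eq_zero]

end CommRing

theorem le_one_of_odd_of_mul_eq {d : ℕ} {u v w x y z : ℤ} (hu : Odd u) (hv : Odd v) (hw : Odd w)
    (h : u * v * w = (2 ^ d * x - u) * (2 ^ d * y - v) * (2 ^ d * z - w)) : d ≤ 1 := by
  have hx : 2 ^ d * x - u ≡ -u [ZMOD 2 ^ d] := Int.modEq_iff_dvd.2 ⟨-x, by ring⟩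
  have hy : 2 ^ d * y - v ≡ -v [ZMOD 2 ^ d] := Int.modEq_iff_dvd.2 ⟨-y, by ring⟩
  have hz : 2 ^ d * z - w ≡ -w [ZMOD 2 ^ d] := Int.modEq_iff_dvd.2 ⟨-z, by ring⟩
  have hdvd : (2 : ℤ) ^ d ∣ 2 * (u * v * w) := by
    have := Int.modEq_iff_dvd.1 ((hx.mul hy).mul hz)
    rw [← h, show -u * -v * -w - u * v * w = -(2 * (u * v * w)) by ring] at this
    exact dvd_neg.1 this
  by_contra! hd
  have h4 : (2 : ℤ) * 2 ∣ 2 * (u * v * w) := (pow_dvd_pow 2 hd).trans hdvd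
  exact Int.not_even_iff_odd.2 ((hu.mul hv).mul hw)
    (even_iff_two_dvd.2 ((mul_dvd_mul_iff_left two_ne_zero).1 h4))

theorem exists_eq_two_pow_mul_odd_of_lt {m : ℕ} {x : ℤ} (hx0 : 0 < x) (hxm : x < 2 ^ m) :
    ∃ a u, a < m ∧ Odd u ∧ x = 2 ^ a * u := by
  lift x to ℕ using hx0.le
  obtain ⟨a, u, hu, rfl⟩ := Nat.exists_eq_two_pow_mul_odd (n := x) (by omega)
  refine ⟨a, u, ?_, by exact_mod_cast hu, by push_cast; rfl⟩
  have : 2 ^ a * u < 2 ^ m := by exact_mod_cast hxm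
  exact (Nat.pow_lt_pow_iff_right one_lt_two).1
    (lt_of_le_of_lt (Nat.le_mul_of_pos_right _ hu.pos) this)

theorem add_one_eq_of_isCevaConcurrent_of_le {m a b c : ℕ} {u v w : ℤ} (hu : Odd u) (hv : Odd v)
    (hw : Odd w) (hac : a ≤ c) (hbc : b ≤ c) (hcm : c < m)
    (h : IsCevaConcurrent (2 ^ m) (2 ^ a * u) (2 ^ b * v) (2 ^ c * w)) : c + 1 = m := by
  have factor : ∀ {e : ℕ} (t : ℤ), e ≤ c →
      (2 : ℤ) ^ m - 2 ^ e * t = 2 ^ e * (2 ^ (m - c) * 2 ^ (c - e) - t) := by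
    intro e t he
    rw [mul_sub, ← pow_add, ← pow_add]
    congr 2
    omega
  rw [IsCevaConcurrent, factor u hac, factor v hbc, factor w le_rfl, Nat.sub_self, pow_zero] at h
  have hodd : u * v * w = (2 ^ (m - c) * 2 ^ (c - a) - u) * (2 ^ (m - c) * 2 ^ (c - b) - v) *
      (2 ^ (m - c) * 1 - w) := by
    refine mul_left_cancel₀ (by positivity : (2 : ℤ) ^ a * 2 ^ b * 2 ^ c ≠ 0) ?_
    linear_combination h
  have := le_one_of_odd_of_mul_eq hu hv hw hodd
  omega

theorem two_mul_eq_two_pow_succ_of_pos_of_lt {c : ℕ} {w : ℤ} (h0 : 0 < 2 ^ c * w)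
    (h1 : 2 ^ c * w < 2 ^ (c + 1)) :
    2 * (2 ^ c * w) = 2 ^ (c + 1) := by
  have hw0 : 0 < w := pos_of_mul_pos_right h0 (by positivity)
  have hw2 : w < 2 :=
    lt_of_mul_lt_mul_left (by rwa [← pow_succ]) (by positivity : (0 : ℤ) ≤ 2 ^ c)
  obtain rfl : w = 1 := by omega
  ring

theorem two_mul_eq_of_isCevaConcurrent {m : ℕ} {i j k : ℤ} (hi0 : 0 < i) (him : i < 2 ^ m)
    (hj0 : 0 < j) (hjm : j < 2 ^ m) (hk0 : 0 < k) (hkm : k < 2 ^ m)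
    (h : IsCevaConcurrent (2 ^ m) i j k) : 2 * i = 2 ^ m ∨ 2 * j = 2 ^ m ∨ 2 * k = 2 ^ m := by
  obtain ⟨a, u, ham, hu, rfl⟩ := exists_eq_two_pow_mul_odd_of_lt hi0 him
  obtain ⟨b, v, hbm, hv, rfl⟩ := exists_eq_two_pow_mul_odd_of_lt hj0 hjm
  obtain ⟨c, w, hcm, hw, rfl⟩ := exists_eq_two_pow_mul_odd_of_lt hk0 hkm
  rcases (by omega : (a ≤ c ∧ b ≤ c) ∨ (b ≤ a ∧ c ≤ a) ∨ (c ≤ b ∧ a ≤ b))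
    with ⟨hac, hbc⟩ | ⟨hba, hca⟩ | ⟨hcb, hab⟩
  · obtain rfl := add_one_eq_of_isCevaConcurrent_of_le hu hv hw hac hbc hcm h
    exact .inr <| .inr <| two_mul_eq_two_pow_succ_of_pos_of_lt hk0 hkm
  · obtain rfl := add_one_eq_of_isCevaConcurrent_of_le hv hw hu hba hca ham h.rotate
    exact .inl <| two_mul_eq_two_pow_succ_of_pos_of_lt hi0 him
  · obtain rfl := add_one_eq_of_isCevaConcurrent_of_le hw hu hv hcb hab hbm h.rotate.rotate
    exact .inr <| .inl <| two_mul_eq_two_pow_succ_of_pos_of_lt hj0 hjm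

/-- For `q = 2^m` (with `m ≥ 1`) and integers `1 ≤ i, j, k ≤ q − 1`, the equation
`i·j·k = (q−i)·(q−j)·(q−k)` holds iff one of `i, j, k` equals `q/2` and the
other two sum to `q`. -/
theorem stmt_10 (m q : ℕ) (hm : 1 ≤ m) (hq : q = 2 ^ m)
    (i j k : ℤ)
    (hi1 : 1 ≤ i) (hi2 : i ≤ (q : ℤ) - 1)
    (hj1 : 1 ≤ j) (hj2 : j ≤ (q : ℤ) - 1)
    (hk1 : 1 ≤ k) (hk2 : k ≤ (q : ℤ) - 1) :
    i * j * k = ((q : ℤ) - i) * ((q : ℤ) - j) * ((q : ℤ) - k) ↔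
      (i = (q : ℤ) / 2 ∧ j + k = (q : ℤ)) ∨
      (j = (q : ℤ) / 2 ∧ i + k = (q : ℤ)) ∨
      (k = (q : ℤ) / 2 ∧ i + j = (q : ℤ)) := by
  subst hq
  push_cast at *
  have half_iff : ∀ x : ℤ, x = 2 ^ m / 2 ↔ 2 ^ m = 2 * x := by
    obtain ⟨n, rfl⟩ : ∃ n, m = n + 1 := ⟨m - 1, by omega⟩
    intro x
    rw [pow_succ, Int.mul_ediv_cancel _ two_ne_zero]
    constructor <;> intro <;> linarith
  have median {x y z : ℤ} (hz : z = 2 ^ m / 2) :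
      IsCevaConcurrent (2 ^ m) x y z ↔ x + y = 2 ^ m :=
    isCevaConcurrent_iff_add_eq_of_two_mul ((half_iff z).1 hz) (by positivity)
  change IsCevaConcurrent _ i j k ↔ _
  constructor
  · intro h
    rcases two_mul_eq_of_isCevaConcurrent (by omega) (by linarith) (by omega) (by linarith)
      (by omega) (by linarith) h with hi | hj | hk
    · have hi := (half_iff i).2 hi.symm
      exact .inl ⟨hi, (median hi).1 h.rotate⟩
    · have hj := (half_iff j).2 hj.symm
      exact .inr <| .inl ⟨hj, add_comm k i ▸ (median hj).1 h.rotate.rotate⟩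
    · have hk := (half_iff k).2 hk.symm
      exact .inr <| .inr ⟨hk, (median hk).1 h⟩
  · rintro (⟨hi, hjk⟩ | ⟨hj, hik⟩ | ⟨hk, hij⟩)
    · exact ((median hi).2 hjk).rotate.rotate
    · exact ((median hj).2 (add_comm i k ▸ hik)).rotate
    · exact (median hk).2 hij
end

section
/- Let m ≥ 1 be a natural number and set q = 2^m. Then the number of triples (i, j, k) of integers with 1 ≤ i ≤ q−1, 1 ≤ j ≤ q−1, 1 ≤ k ≤ q−1 satisfying i·j·k = (q−i)·(q−j)·(q−k) is exactly 3q − 5. -/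
/-!
Write `q = 2h` with `h = 2^n`. If none of `i, j, k` equals `h`, then each of them is `2^a u` with
`u` odd and `a ≤ n - 1`, so `q - i = 2^a w` with `w ≡ -u (mod 4)`. Cancelling the powers of two
from the Ceva equation leaves `uvw = u'v'w' ≡ -uvw (mod 4)`, impossible for odd `uvw`. Hence one
coordinate is `h`, and then the equation reduces to the other two summing to `q`. The solutions
thus form three lines of `q - 1` points meeting pairwise only in `(h, h, h)`.
-/

open Finset

noncomputable def cevaTriples (q : ℤ) : Finset (ℤ × ℤ × ℤ) :=
  (Icc 1 (q - 1) ×ˢ Icc 1 (q - 1) ×ˢ Icc 1 (q - 1)).filter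
    fun t => t.1 * t.2.1 * t.2.2 = (q - t.1) * (q - t.2.1) * (q - t.2.2)

noncomputable def cevaLines (h : ℤ) : Finset (ℤ × ℤ × ℤ) :=
  (Icc 1 (2 * h - 1)).image (fun j => (h, j, 2 * h - j)) ∪
    (Icc 1 (2 * h - 1)).image (fun i => (i, h, 2 * h - i)) ∪
    (Icc 1 (2 * h - 1)).image (fun i => (i, 2 * h - i, h))

theorem Finset.card_union_union_add_two_of_inter_eq_singleton {α : Type*} [DecidableEq α]
    {A B C : Finset α} {p : α} (hAB : A ∩ B = {p}) (hAC : A ∩ C = {p}) (hBC : B ∩ C = {p}) :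
    #(A ∪ B ∪ C) + 2 = #A + #B + #C := by
  have hAB_C : (A ∪ B) ∩ C = {p} := by rw [union_inter_distrib_right, hAC, hBC, union_self]
  have h₁ := card_union_add_card_inter A B
  have h₂ := card_union_add_card_inter (A ∪ B) C
  rw [hAB, card_singleton] at h₁
  rw [hAB_C, card_singleton] at h₂
  omega

theorem Int.not_modEq_four_neg_self_of_odd {t : ℤ} (ht : Odd t) : ¬t ≡ -t [ZMOD 4] := by
  obtain ⟨s, rfl⟩ := ht
  unfold Int.ModEq
  omega

theorem Int.exists_two_pow_mul_odd_of_lt_two_pow {n : ℕ} {i : ℤ} (h0 : 0 < i)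
    (hlt : i < 2 ^ (n + 1)) (hne : i ≠ 2 ^ n) :
    ∃ a : ℕ, ∃ u : ℤ, Odd u ∧ a < n ∧ i = 2 ^ a * u := by
  lift i to ℕ using h0.le
  obtain ⟨a, u, hu, rfl⟩ := Nat.exists_eq_two_pow_mul_odd (n := i) (by omega)
  refine ⟨a, u, by exact_mod_cast hu, ?_, by push_cast; ring⟩
  have hlt' : 2 ^ a * u < 2 ^ (n + 1) := by exact_mod_cast hlt
  have ha : a < n + 1 := (Nat.pow_lt_pow_iff_right (by norm_num)).mp
    (lt_of_le_of_lt (Nat.le_mul_of_pos_right _ hu.pos) hlt')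
  refine lt_of_le_of_ne (Nat.lt_succ_iff.mp ha) fun han => hne ?_
  subst han
  have hu1 : u = 1 := by
    rw [pow_succ] at hlt'
    have := Nat.lt_of_mul_lt_mul_left hlt'
    obtain ⟨s, rfl⟩ := hu
    omega
  simp [hu1]

theorem Int.exists_odd_parts_of_lt_two_pow {n : ℕ} {i : ℤ} (h0 : 0 < i) (hlt : i < 2 ^ (n + 1))
    (hne : i ≠ 2 ^ n) :
    ∃ a : ℕ, ∃ u w : ℤ, Odd u ∧ w ≡ -u [ZMOD 4] ∧ i = 2 ^ a * u ∧ 2 ^ (n + 1) - i = 2 ^ a * w := by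
  obtain ⟨a, u, hu, ha, rfl⟩ := Int.exists_two_pow_mul_odd_of_lt_two_pow h0 hlt hne
  obtain ⟨d, rfl⟩ := Nat.exists_eq_add_of_lt ha
  refine ⟨a, u, 2 ^ (d + 2) - u, hu, ?_, rfl, by ring⟩
  have h4 : (4 : ℤ) ∣ 2 ^ (d + 2) := ⟨2 ^ d, by ring⟩
  simpa using (Int.modEq_zero_iff_dvd.mpr h4).sub_right u

theorem eq_half_of_mem_cevaTriples {n : ℕ} {i j k : ℤ}
    (ht : (i, j, k) ∈ cevaTriples (2 ^ (n + 1))) : i = 2 ^ n ∨ j = 2 ^ n ∨ k = 2 ^ n := by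
  simp only [cevaTriples, mem_filter, mem_product, mem_Icc] at ht
  obtain ⟨⟨⟨hi₀, hi₁⟩, ⟨hj₀, hj₁⟩, ⟨hk₀, hk₁⟩⟩, heq⟩ := ht
  by_contra! hne
  obtain ⟨a, u, u', hu, hu', rfl, hi⟩ :=
    Int.exists_odd_parts_of_lt_two_pow (n := n) (by omega) (by omega) hne.1
  obtain ⟨b, v, v', hv, hv', rfl, hj⟩ :=
    Int.exists_odd_parts_of_lt_two_pow (n := n) (by omega) (by omega) hne.2.1
  obtain ⟨c, w, w', hw, hw', rfl, hk⟩ :=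
    Int.exists_odd_parts_of_lt_two_pow (n := n) (by omega) (by omega) hne.2.2
  rw [hi, hj, hk] at heq
  have hcancel : u * v * w = u' * v' * w' := by
    apply mul_left_cancel₀ (by positivity : (2 : ℤ) ^ (a + b + c) ≠ 0)
    linear_combination heq
  have hneg : u * v * w ≡ -(u * v * w) [ZMOD 4] := by
    calc u * v * w = u' * v' * w' := hcancel
      _ ≡ -u * -v * -w [ZMOD 4] := (hu'.mul hv').mul hw'
      _ = -(u * v * w) := by ring
  exact Int.not_modEq_four_neg_self_of_odd ((hu.mul hv).mul hw) hneg

theorem add_eq_of_mul_eq_sub_mul_sub {q j k : ℤ} (hq : q ≠ 0)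
    (h : j * k = (q - j) * (q - k)) : j + k = q :=
  mul_left_cancel₀ hq (by linear_combination h)

theorem cevaLines_subset_cevaTriples (h : ℤ) : cevaLines h ⊆ cevaTriples (2 * h) := by
  intro t ht
  simp only [cevaLines, mem_union, mem_image, mem_Icc] at ht
  simp only [cevaTriples, mem_filter, mem_product, mem_Icc]
  rcases ht with (⟨j, hj, rfl⟩ | ⟨i, hi, rfl⟩) | ⟨i, hi, rfl⟩ <;>
    exact ⟨by dsimp only; omega, by ring⟩

theorem mem_cevaLines_of_mem_cevaTriples {h i j k : ℤ} (hh : 0 < h)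
    (ht : (i, j, k) ∈ cevaTriples (2 * h)) (hhalf : i = h ∨ j = h ∨ k = h) :
    (i, j, k) ∈ cevaLines h := by
  simp only [cevaTriples, mem_filter, mem_product, mem_Icc] at ht
  obtain ⟨⟨hi, hj, hk⟩, heq⟩ := ht
  have h2 : (2 : ℤ) * h ≠ 0 := by positivity
  simp only [cevaLines, mem_union, mem_image, mem_Icc, Prod.mk.injEq]
  rcases hhalf with rfl | rfl | rfl
  · have := add_eq_of_mul_eq_sub_mul_sub (j := j) (k := k) h2
      (mul_left_cancel₀ hh.ne' (by linear_combination heq))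
    exact Or.inl (Or.inl ⟨j, hj, rfl, rfl, by omega⟩)
  · have := add_eq_of_mul_eq_sub_mul_sub (j := i) (k := k) h2
      (mul_left_cancel₀ hh.ne' (by linear_combination heq))
    exact Or.inl (Or.inr ⟨i, hi, rfl, rfl, by omega⟩)
  · have := add_eq_of_mul_eq_sub_mul_sub (j := i) (k := j) h2
      (mul_left_cancel₀ hh.ne' (by linear_combination heq))
    exact Or.inr ⟨i, hi, rfl, by omega, rfl⟩

theorem cevaTriples_two_pow_succ (n : ℕ) : cevaTriples (2 ^ (n + 1)) = cevaLines (2 ^ n) := by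
  rw [pow_succ']
  refine Subset.antisymm (fun ⟨i, j, k⟩ ht => ?_) (cevaLines_subset_cevaTriples _)
  refine mem_cevaLines_of_mem_cevaTriples (by positivity) ht ?_
  exact eq_half_of_mem_cevaTriples (by rwa [pow_succ'])

theorem card_cevaLines {h : ℤ} (hh : 0 < h) : (#(cevaLines h) : ℤ) = 3 * (2 * h - 1) - 2 := by
  unfold cevaLines
  set I := Icc 1 (2 * h - 1)
  have hI : (#I : ℤ) = 2 * h - 1 := by
    rw [Int.card_Icc, Int.toNat_of_nonneg (by omega)]
    ring
  have hcard {f : ℤ → ℤ × ℤ × ℤ} (hf : f.Injective) : #(I.image f) = #I :=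
    card_image_of_injective _ hf
  have hmeet := card_union_union_add_two_of_inter_eq_singleton (p := (h, h, h))
    (A := I.image fun j => (h, j, 2 * h - j)) (B := I.image fun i => (i, h, 2 * h - i))
    (C := I.image fun i => (i, 2 * h - i, h))
    (by ext ⟨i, j, k⟩; simp [I]; omega) (by ext ⟨i, j, k⟩; simp [I]; omega)
    (by ext ⟨i, j, k⟩; simp [I]; omega)
  rw [hcard (fun _ _ e => by simpa using e), hcard (fun _ _ e => by simpa using e),
    hcard (fun _ _ e => by simpa using e)] at hmeet
  omega

/-- For `q = 2^m` (with `m ≥ 1`), the number of integer triples `(i, j, k)` with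
`1 ≤ i, j, k ≤ q − 1` and `i·j·k = (q−i)·(q−j)·(q−k)` is exactly `3q − 5`. -/
theorem stmt_11 (m q : ℕ) (hm : 1 ≤ m) (hq : q = 2 ^ m) :
    ((((Finset.Icc (1 : ℤ) ((q : ℤ) - 1)) ×ˢ (Finset.Icc (1 : ℤ) ((q : ℤ) - 1))
        ×ˢ (Finset.Icc (1 : ℤ) ((q : ℤ) - 1))).filter
      (fun t : ℤ × ℤ × ℤ => t.1 * t.2.1 * t.2.2 =
        ((q : ℤ) - t.1) * ((q : ℤ) - t.2.1) * ((q : ℤ) - t.2.2))).card : ℤ)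
      = 3 * (q : ℤ) - 5 := by
  obtain ⟨n, rfl⟩ := Nat.exists_eq_add_of_le' hm
  subst hq
  change (#(cevaTriples ((2 ^ (n + 1) : ℕ) : ℤ)) : ℤ) = _
  rw [Nat.cast_pow, Nat.cast_two, cevaTriples_two_pow_succ, card_cevaLines (by positivity)]
  ring
end
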